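/- arXiv:1704.01987 — 6 statements merged into one kernel-verified Lean document; each statement's English description precedes it below -/
import Mathlib

section
/- (Lemma 2.6, non-strict case.) Let F be a symmetric bilinear form on V such that F(v,v) ≥ 0 for every v ∈ C0 (i.e. for every v with J(v) = 0). Then r+ := inf{ F(v,v)/J(v) : v ∈ V, J(v) > 0 } is greater than or equal to r− := sup{ F(u,u)/J(u) : u ∈ V, J(u) < 0 } (equivalently: for all u, v ∈ V with J(u) < 0 < J(v) one has F(u,u)/J(u) ≤ F(v,v)/J(v)), and for every real number r with r− ≤ r ≤ r+ one has F(v,v) ≥ r·J(v) for every v ∈ V. -/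
/-!
For `B u u < 0 < B v v` the line `t ↦ v + t • u` crosses the zero cone of `B` on both sides
of `v`. With `λ = F v v / B v v`, the form `G = F - λ • B` vanishes at `v` and is non-negative at
both crossing points; along the line it is `p t + G u u t²`, so the two crossings `t > 0 > -s`
give `p + G u u t ≥ 0 ≥ p - G u u s`, whence `G u u ≥ 0`, i.e. `F u u / B u u ≤ λ`.
-/

section BilinearRatio

variable {V : Type*} [AddCommGroup V] [Module ℝ V]

lemma LinearMap.apply_add_smul_self (B : V →ₗ[ℝ] V →ₗ[ℝ] ℝ) (v u : V) (t : ℝ) :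
    B (v + t • u) (v + t • u) = B v v + (B v u + B u v) * t + B u u * t ^ 2 := by
  simp only [map_add, map_smul, LinearMap.add_apply, LinearMap.smul_apply, smul_eq_mul]
  ring

lemma exists_pos_root_of_pos_of_neg {a b c : ℝ} (ha : 0 < a) (hc : c < 0) :
    ∃ t : ℝ, 0 < t ∧ a + b * t + c * t ^ 2 = 0 := by
  have hdisc : 0 ≤ discrim c b a := by unfold discrim; nlinarith [sq_nonneg b]
  set s := Real.sqrt (discrim c b a)
  have hs : discrim c b a = s * s := (Real.mul_self_sqrt hdisc).symm
  have hbs : |b| < s := abs_lt_of_sq_lt_sq (by unfold discrim at hs; nlinarith) (Real.sqrt_nonneg _)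
  refine ⟨(-b - s) / (2 * c), div_pos_of_neg_of_neg (by linarith [neg_abs_le b]) (by linarith), ?_⟩
  have := (quadratic_eq_zero_iff hc.ne hs _).2 (Or.inr rfl)
  linear_combination this

variable (B : V →ₗ[ℝ] V →ₗ[ℝ] ℝ) {u v : V}

lemma exists_pos_apply_add_smul_self_eq_zero (hv : 0 < B v v) (hu : B u u < 0) :
    ∃ t : ℝ, 0 < t ∧ B (v + t • u) (v + t • u) = 0 := by
  simpa only [B.apply_add_smul_self] using exists_pos_root_of_pos_of_neg (b := B v u + B u v) hv hu

lemma apply_self_nonneg_of_nonneg_of_isotropic {G : V →ₗ[ℝ] V →ₗ[ℝ] ℝ}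
    (hG : ∀ w, B w w = 0 → 0 ≤ G w w) (hGv : G v v = 0) (hv : 0 < B v v) (hu : B u u < 0) :
    0 ≤ G u u := by
  obtain ⟨t, ht, hBt⟩ := exists_pos_apply_add_smul_self_eq_zero B hv hu
  obtain ⟨s, hs, hBs⟩ := exists_pos_apply_add_smul_self_eq_zero B hv (u := -u) (by simpa using hu)
  have hGt := hG _ hBt
  have hGs := hG _ hBs
  simp only [G.apply_add_smul_self, hGv, map_neg, LinearMap.neg_apply, neg_neg] at hGt hGs
  have hpt : 0 ≤ (G v u + G u v) + G u u * t := by nlinarith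
  have hps : 0 ≤ -(G v u + G u v) + G u u * s := by nlinarith
  nlinarith

lemma div_le_div_of_nonneg_of_isotropic (F : V →ₗ[ℝ] V →ₗ[ℝ] ℝ)
    (hF : ∀ w, B w w = 0 → 0 ≤ F w w) (hu : B u u < 0) (hv : 0 < B v v) :
    F u u / B u u ≤ F v v / B v v := by
  set r := F v v / B v v
  have hG := apply_self_nonneg_of_nonneg_of_isotropic B (G := F - r • B)
    (fun w hw => by simpa [hw] using hF w hw) (by simp [r, hv.ne']) hv hu
  simp only [LinearMap.sub_apply, LinearMap.smul_apply, smul_eq_mul, sub_nonneg] at hG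
  rwa [div_le_iff_of_neg hu]

lemma mul_apply_self_le_of_ratio_bounds (F : V →ₗ[ℝ] V →ₗ[ℝ] ℝ)
    (hF : ∀ w, B w w = 0 → 0 ≤ F w w) {r : ℝ}
    (hneg : ∀ u, B u u < 0 → F u u / B u u ≤ r) (hpos : ∀ v, 0 < B v v → r ≤ F v v / B v v)
    (v : V) : r * B v v ≤ F v v := by
  rcases lt_trichotomy (B v v) 0 with h | h | h
  · have := hneg v h
    rw [div_le_iff_of_neg h] at this
    linarith
  · simpa [h] using hF v h
  · have := hpos v h
    rwa [le_div_iff₀ h] at this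

end BilinearRatio

theorem stmt_0_general
    {V : Type*} [AddCommGroup V] [Module ℝ V]
    (B : V →ₗ[ℝ] V →ₗ[ℝ] ℝ)
    (hBindef : ∃ v w : V, 0 < B v v ∧ B w w < 0)
    (F : V →ₗ[ℝ] V →ₗ[ℝ] ℝ)
    (hF0 : ∀ v : V, B v v = 0 → 0 ≤ F v v) :
    sSup {x : ℝ | ∃ u : V, B u u < 0 ∧ x = F u u / B u u} ≤
      sInf {x : ℝ | ∃ v : V, 0 < B v v ∧ x = F v v / B v v} ∧
    ∀ r : ℝ,
      sSup {x : ℝ | ∃ u : V, B u u < 0 ∧ x = F u u / B u u} ≤ r →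
      r ≤ sInf {x : ℝ | ∃ v : V, 0 < B v v ∧ x = F v v / B v v} →
      ∀ v : V, r * B v v ≤ F v v := by
  obtain ⟨v₀, w₀, hv₀, hw₀⟩ := hBindef
  set Sneg := {x : ℝ | ∃ u : V, B u u < 0 ∧ x = F u u / B u u}
  set Spos := {x : ℝ | ∃ v : V, 0 < B v v ∧ x = F v v / B v v}
  have hle : ∀ x ∈ Sneg, ∀ y ∈ Spos, x ≤ y := by
    rintro _ ⟨u, hu, rfl⟩ _ ⟨v, hv, rfl⟩
    exact div_le_div_of_nonneg_of_isotropic B F hF0 hu hv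
  have hbddA : BddAbove Sneg := ⟨_, fun x hx => hle x hx _ ⟨v₀, hv₀, rfl⟩⟩
  have hbddB : BddBelow Spos := ⟨_, fun y hy => hle _ ⟨w₀, hw₀, rfl⟩ y hy⟩
  refine ⟨csSup_le ⟨_, w₀, hw₀, rfl⟩ fun x hx => le_csInf ⟨_, v₀, hv₀, rfl⟩ (hle x hx),
    fun r hSup hInf => mul_apply_self_le_of_ratio_bounds B F hF0 ?_ ?_⟩
  · exact fun u hu => (le_csSup hbddA ⟨u, hu, rfl⟩).trans hSup
  · exact fun v hv => hInf.trans (csInf_le hbddB ⟨v, hv, rfl⟩)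

/-- Lemma 2.6 (non-strict case): if the symmetric bilinear form `F` is non-negative
on the zero cone of the nondegenerate indefinite symmetric bilinear form `B`,
then `r₋ = sup_{J(u)<0} F(u,u)/J(u) ≤ r₊ = inf_{J(v)>0} F(v,v)/J(v)`, and for every
`r` with `r₋ ≤ r ≤ r₊` one has `F(v,v) ≥ r·J(v)` for all `v`. -/
theorem stmt_0
    {V : Type*} [AddCommGroup V] [Module ℝ V] [FiniteDimensional ℝ V]
    (B : V →ₗ[ℝ] V →ₗ[ℝ] ℝ)
    (hBsymm : ∀ v w : V, B v w = B w v)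
    (hBnd : ∀ v : V, (∀ w : V, B v w = 0) → v = 0)
    (hBindef : ∃ v w : V, 0 < B v v ∧ B w w < 0)
    (F : V →ₗ[ℝ] V →ₗ[ℝ] ℝ)
    (hFsymm : ∀ v w : V, F v w = F w v)
    (hF0 : ∀ v : V, B v v = 0 → 0 ≤ F v v) :
    sSup {x : ℝ | ∃ u : V, B u u < 0 ∧ x = F u u / B u u} ≤
      sInf {x : ℝ | ∃ v : V, 0 < B v v ∧ x = F v v / B v v} ∧
    ∀ r : ℝ,
      sSup {x : ℝ | ∃ u : V, B u u < 0 ∧ x = F u u / B u u} ≤ r →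
      r ≤ sInf {x : ℝ | ∃ v : V, 0 < B v v ∧ x = F v v / B v v} →
      ∀ v : V, r * B v v ≤ F v v :=
  stmt_0_general B hBindef F hF0
end

section
/- (Remark 2.7.) Let G be a symmetric bilinear form on V. If G(v,v) ≥ 0 for every v with B(v,v) = 0, then there exists a real number a such that G(v,v) ≥ a·B(v,v) for all v ∈ V. If moreover G(v,v) > 0 for every nonzero v with B(v,v) = 0, then there exists a real number a such that G(v,v) > a·B(v,v) for all nonzero v ∈ V. -/
/-!
If `B v v > 0 > B w w`, the quadratic `t ↦ B (v + t • w) (v + t • w)` has a negative and a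
positive root. `G` is nonnegative at both, and eliminating `t` gives
`G w w / B w w ≤ G v v / B v v`; any `a` between the supremum of the left-hand side and the
infimum of the right-hand side works.

For the strict bound, `H = G - a₀ • B` is positive semidefinite, so its null vectors form its
kernel, a subspace on which `B` has no nonzero isotropic vector and is therefore definite, say
positive. `H` is bounded below by a positive constant on the compact set of unit vectors with
`B ≤ 0`, hence `H + ε • B` is positive definite for small `ε > 0`, and `a = a₀ - ε` works.
-/

theorem exists_quadratic_roots_neg_pos {a c : ℝ} (b : ℝ) (ha : 0 < a) (hc : c < 0) :
    ∃ t₁ t₂ : ℝ, t₁ < 0 ∧ 0 < t₂ ∧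
      c * t₁ ^ 2 + 2 * b * t₁ + a = 0 ∧ c * t₂ ^ 2 + 2 * b * t₂ + a = 0 := by
  set s := Real.sqrt (b ^ 2 - a * c)
  have hs : s ^ 2 = b ^ 2 - a * c := Real.sq_sqrt (by nlinarith [sq_nonneg b])
  have hbs : |b| < s := Real.lt_sqrt_of_sq_lt (by rw [sq_abs]; nlinarith)
  refine ⟨(s - b) / c, (-b - s) / c, div_neg_of_pos_of_neg ?_ hc,
    div_pos_of_neg_of_neg ?_ hc, ?_, ?_⟩
  · linarith [le_abs_self b]
  · linarith [neg_abs_le b]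
  all_goals field_simp [hc.ne]
  all_goals linear_combination hs

theorem bilin_add_smul_apply_self {V : Type*} [AddCommGroup V] [Module ℝ V]
    (Q : V →ₗ[ℝ] V →ₗ[ℝ] ℝ) (hQ : ∀ x y, Q x y = Q y x) (x y : V) (t : ℝ) :
    Q (x + t • y) (x + t • y) = Q y y * t ^ 2 + 2 * Q x y * t + Q x x := by
  simp only [map_add, LinearMap.add_apply, map_smul, LinearMap.smul_apply, smul_eq_mul, hQ y x]
  ring

theorem cross_mul_le_of_nonneg_on_isotropic {V : Type*} [AddCommGroup V] [Module ℝ V]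
    {B G : V →ₗ[ℝ] V →ₗ[ℝ] ℝ} (hBsymm : ∀ v w, B v w = B w v) (hGsymm : ∀ v w, G v w = G w v)
    (hG0 : ∀ u, B u u = 0 → 0 ≤ G u u) {v w : V} (hv : 0 < B v v) (hw : B w w < 0) :
    G v v * B w w ≤ G w w * B v v := by
  obtain ⟨t₁, t₂, ht₁, ht₂, hr₁, hr₂⟩ := exists_quadratic_roots_neg_pos (B v w) hv hw
  have hnull : ∀ t, B w w * t ^ 2 + 2 * B v w * t + B v v = 0 →
      0 ≤ G w w * t ^ 2 + 2 * G v w * t + G v v := fun t ht => by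
    rw [← bilin_add_smul_apply_self G hGsymm]
    exact hG0 _ (by rwa [bilin_add_smul_apply_self B hBsymm])
  have h₁ := mul_nonpos_of_nonpos_of_nonneg hw.le (hnull t₁ hr₁)
  have h₂ := mul_nonpos_of_nonpos_of_nonneg hw.le (hnull t₂ hr₂)
  -- along `v + t • w`, `B w w • G - G w w • B` is affine in `t`, and nonpositive at both roots
  have key : (G v v * B w w - G w w * B v v) * (t₂ - t₁) =
      t₂ * (B w w * (G w w * t₁ ^ 2 + 2 * G v w * t₁ + G v v)) +
        -t₁ * (B w w * (G w w * t₂ ^ 2 + 2 * G v w * t₂ + G v v)) := by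
    linear_combination (G w w * t₁) * hr₂ - (G w w * t₂) * hr₁
  have hK := key ▸ add_nonpos (mul_nonpos_of_nonneg_of_nonpos ht₂.le h₁)
    (mul_nonpos_of_nonneg_of_nonpos (neg_nonneg.2 ht₁.le) h₂)
  exact sub_nonpos.1 (nonpos_of_mul_nonpos_left hK (by linarith))

theorem exists_smul_le_of_nonneg_on_isotropic {V : Type*} [AddCommGroup V] [Module ℝ V]
    {B G : V →ₗ[ℝ] V →ₗ[ℝ] ℝ} (hBsymm : ∀ v w, B v w = B w v)
    (hBindef : ∃ v w : V, 0 < B v v ∧ B w w < 0) (hGsymm : ∀ v w, G v w = G w v)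
    (hG0 : ∀ v, B v v = 0 → 0 ≤ G v v) :
    ∃ a : ℝ, ∀ v, a * B v v ≤ G v v := by
  obtain ⟨v₀, w₀, hv₀, hw₀⟩ := hBindef
  have hratio : ∀ v w, 0 < B v v → B w w < 0 → G w w / B w w ≤ G v v / B v v := by
    intro v w hv hw
    rw [div_le_iff_of_neg hw, div_mul_eq_mul_div, div_le_iff₀ hv]
    exact cross_mul_le_of_nonneg_on_isotropic hBsymm hGsymm hG0 hv hw
  set S := (fun w => G w w / B w w) '' {w | B w w < 0}
  have hS : S.Nonempty := ⟨_, w₀, hw₀, rfl⟩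
  have hSv : ∀ v, 0 < B v v → ∀ x ∈ S, x ≤ G v v / B v v := by
    rintro v hv _ ⟨w, hw, rfl⟩
    exact hratio v w hv hw
  refine ⟨sSup S, fun v => ?_⟩
  rcases lt_trichotomy (B v v) 0 with hneg | hzero | hpos
  · rw [← div_le_iff_of_neg hneg]
    exact le_csSup ⟨_, hSv v₀ hv₀⟩ ⟨v, hneg, rfl⟩
  · simpa [hzero] using hG0 v hzero
  · rw [← le_div_iff₀ hpos]
    exact csSup_le hS (hSv v hpos)

theorem apply_eq_zero_of_apply_self_eq_zero {V : Type*} [AddCommGroup V] [Module ℝ V]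
    {H : V →ₗ[ℝ] V →ₗ[ℝ] ℝ} (hHsymm : ∀ v w, H v w = H w v) (hH : ∀ v, 0 ≤ H v v)
    {v : V} (hv : H v v = 0) (w : V) : H v w = 0 := by
  by_contra hvw
  have ht : 2 * H v w * (-(H w w + 1) / (2 * H v w)) = -(H w w + 1) := by field_simp
  have := hH (w + (-(H w w + 1) / (2 * H v w)) • v)
  rw [bilin_add_smul_apply_self H hHsymm, hv, hHsymm w v] at this
  linarith

theorem pos_or_neg_on_null_of_ne_zero {V : Type*} [AddCommGroup V] [Module ℝ V]
    {B H : V →ₗ[ℝ] V →ₗ[ℝ] ℝ} (hBsymm : ∀ v w, B v w = B w v)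
    (hHsymm : ∀ v w, H v w = H w v) (hH : ∀ v, 0 ≤ H v v)
    (hBH : ∀ v, v ≠ 0 → H v v = 0 → B v v ≠ 0) :
    (∀ v, v ≠ 0 → H v v = 0 → 0 < B v v) ∨ (∀ v, v ≠ 0 → H v v = 0 → B v v < 0) := by
  by_contra! ⟨⟨x, hx, hHx, hBx⟩, ⟨y, hy, hHy, hBy⟩⟩
  replace hBx := hBx.lt_of_ne (hBH x hx hHx)
  replace hBy := hBy.lt_of_ne' (hBH y hy hHy)
  obtain ⟨t, -, -, -, ht, -⟩ := exists_quadratic_roots_neg_pos (B y x) hBy hBx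
  refine hBH (y + t • x) (fun h => ?_) ?_ (by rw [bilin_add_smul_apply_self B hBsymm]; exact ht)
  · have : B y y = t ^ 2 * B x x := by
      rw [eq_neg_of_add_eq_zero_left h]
      simp only [map_neg, map_smul, LinearMap.neg_apply, LinearMap.smul_apply, smul_eq_mul]
      ring
    nlinarith [sq_nonneg t]
  · rw [bilin_add_smul_apply_self H hHsymm, hHx, hHy,
      apply_eq_zero_of_apply_self_eq_zero hHsymm hH hHy]
    ring

theorem continuous_bilin_apply_self {E : Type*} [NormedAddCommGroup E] [NormedSpace ℝ E]
    [FiniteDimensional ℝ E] (B : E →ₗ[ℝ] E →ₗ[ℝ] ℝ) : Continuous fun v => B v v :=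
  (LinearMap.continuous_of_finiteDimensional
    ((LinearMap.toContinuousLinearMap : (E →ₗ[ℝ] ℝ) ≃ₗ[ℝ] E →L[ℝ] ℝ).toLinearMap ∘ₗ B)).clm_apply
    continuous_id

theorem exists_pos_add_mul_of_pos_on_null_of_normed {E : Type*} [NormedAddCommGroup E]
    [NormedSpace ℝ E] [FiniteDimensional ℝ E] {H B : E →ₗ[ℝ] E →ₗ[ℝ] ℝ}
    (hH : ∀ v, 0 ≤ H v v) (hBH : ∀ v, v ≠ 0 → H v v = 0 → 0 < B v v) :
    ∃ ε > 0, ∀ v, v ≠ 0 → 0 < H v v + ε * B v v := by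
  have hHc := continuous_bilin_apply_self H
  have hBc := continuous_bilin_apply_self B
  set K := Metric.sphere (0 : E) 1 ∩ {v | B v v ≤ 0}
  have hK : IsCompact K := (isCompact_sphere 0 1).inter_right (isClosed_le hBc continuous_const)
  obtain ⟨m, hm, hmK⟩ := hK.exists_forall_le' hHc.continuousOn fun v ⟨hv1, hvB⟩ =>
    (hH v).lt_of_ne' fun hv0 => (hBH v (ne_zero_of_mem_unit_sphere ⟨v, hv1⟩) hv0).not_ge hvB
  obtain ⟨C, hC⟩ := (isCompact_sphere (0 : E) 1).exists_bound_of_continuousOn hBc.continuousOn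
  have hC' : ∀ v ∈ Metric.sphere (0 : E) 1, |B v v| ≤ |C| := fun v hv =>
    (hC v hv).trans (le_abs_self C)
  refine ⟨m / (|C| + 1), by positivity, ?_⟩
  suffices hS : ∀ u ∈ Metric.sphere (0 : E) 1, 0 < H u u + m / (|C| + 1) * B u u by
    intro v hv
    have hu := hS (‖v‖⁻¹ • v) (by simp [norm_smul, hv])
    simp only [map_smul, LinearMap.smul_apply, smul_eq_mul] at hu
    have hn : 0 < ‖v‖⁻¹ := by positivity
    nlinarith [mul_pos hn hn]
  intro u hu
  rcases le_or_gt (B u u) 0 with hB | hB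
  · have : m / (|C| + 1) * -B u u < m := by
      rw [← abs_of_nonpos hB, div_mul_eq_mul_div, div_lt_iff₀ (by positivity)]
      nlinarith [hC' u hu]
    linarith [hmK u ⟨hu, hB⟩]
  · have := hH u
    positivity

theorem exists_pos_add_mul_of_pos_on_null {V : Type*} [AddCommGroup V]
    [Module ℝ V] [FiniteDimensional ℝ V] {H B : V →ₗ[ℝ] V →ₗ[ℝ] ℝ}
    (hH : ∀ v, 0 ≤ H v v) (hBH : ∀ v, v ≠ 0 → H v v = 0 → 0 < B v v) :
    ∃ ε > 0, ∀ v, v ≠ 0 → 0 < H v v + ε * B v v := by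
  let e := (Module.finBasis ℝ V).equivFun.symm
  obtain ⟨ε, hε, h⟩ := exists_pos_add_mul_of_pos_on_null_of_normed
    (H := H.compl₁₂ e.toLinearMap e.toLinearMap) (B := B.compl₁₂ e.toLinearMap e.toLinearMap)
    (fun x => hH (e x)) (fun x hx => hBH (e x) (e.map_ne_zero_iff.2 hx))
  refine ⟨ε, hε, fun v hv => ?_⟩
  simpa using h (e.symm v) (e.symm.map_ne_zero_iff.2 hv)

theorem exists_smul_lt_of_pos_on_isotropic {V : Type*} [AddCommGroup V] [Module ℝ V]
    [FiniteDimensional ℝ V] {B G : V →ₗ[ℝ] V →ₗ[ℝ] ℝ} (hBsymm : ∀ v w, B v w = B w v)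
    (hBindef : ∃ v w : V, 0 < B v v ∧ B w w < 0) (hGsymm : ∀ v w, G v w = G w v)
    (hG0 : ∀ v, B v v = 0 → 0 ≤ G v v) (hG : ∀ v, v ≠ 0 → B v v = 0 → 0 < G v v) :
    ∃ a : ℝ, ∀ v, v ≠ 0 → a * B v v < G v v := by
  obtain ⟨a₀, ha₀⟩ := exists_smul_le_of_nonneg_on_isotropic hBsymm hBindef hGsymm hG0
  set H := G - a₀ • B
  have hHapply : ∀ v w, H v w = G v w - a₀ * B v w := fun v w => rfl
  have hH : ∀ v, 0 ≤ H v v := fun v => by rw [hHapply]; linarith [ha₀ v]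
  have hHsymm : ∀ v w, H v w = H w v := fun v w => by rw [hHapply, hHapply, hBsymm, hGsymm]
  have hBH : ∀ v, v ≠ 0 → H v v = 0 → B v v ≠ 0 := fun v hv hHv hBv => by
    have := hG v hv hBv
    rw [hHapply, hBv] at hHv
    linarith
  rcases pos_or_neg_on_null_of_ne_zero hBsymm hHsymm hH hBH with hpos | hneg
  · obtain ⟨ε, -, hε⟩ := exists_pos_add_mul_of_pos_on_null hH hpos
    refine ⟨a₀ - ε, fun v hv => ?_⟩
    linarith [hε v hv, hHapply v v]
  · obtain ⟨ε, -, hε⟩ := exists_pos_add_mul_of_pos_on_null (B := -B) hH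
      fun v hv hHv => neg_pos.2 (hneg v hv hHv)
    refine ⟨a₀ + ε, fun v hv => ?_⟩
    have := hε v hv
    rw [LinearMap.neg_apply, LinearMap.neg_apply] at this
    linarith [hHapply v v]

theorem stmt_2_general
    {V : Type*} [AddCommGroup V] [Module ℝ V] [FiniteDimensional ℝ V]
    (B : V →ₗ[ℝ] V →ₗ[ℝ] ℝ)
    (hBsymm : ∀ v w : V, B v w = B w v)
    (hBindef : ∃ v w : V, 0 < B v v ∧ B w w < 0)
    (G : V →ₗ[ℝ] V →ₗ[ℝ] ℝ)
    (hGsymm : ∀ v w : V, G v w = G w v)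
    (hG0 : ∀ v : V, B v v = 0 → 0 ≤ G v v) :
    (∃ a : ℝ, ∀ v : V, a * B v v ≤ G v v) ∧
    ((∀ v : V, v ≠ 0 → B v v = 0 → 0 < G v v) →
      ∃ a : ℝ, ∀ v : V, v ≠ 0 → a * B v v < G v v) :=
  ⟨exists_smul_le_of_nonneg_on_isotropic hBsymm hBindef hGsymm hG0,
    exists_smul_lt_of_pos_on_isotropic hBsymm hBindef hGsymm hG0⟩

/-- Remark 2.7: if the symmetric bilinear form `G` is non-negative on the zero cone of
the nondegenerate indefinite symmetric bilinear form `B`, then `G(v,v) ≥ a·B(v,v)` for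
some real `a` and all `v`; if moreover `G` is positive on the nonzero vectors of the
zero cone, then `G(v,v) > a·B(v,v)` for some real `a` and all nonzero `v`. -/
theorem stmt_2
    {V : Type*} [AddCommGroup V] [Module ℝ V] [FiniteDimensional ℝ V]
    (B : V →ₗ[ℝ] V →ₗ[ℝ] ℝ)
    (hBsymm : ∀ v w : V, B v w = B w v)
    (hBnd : ∀ v : V, (∀ w : V, B v w = 0) → v = 0)
    (hBindef : ∃ v w : V, 0 < B v v ∧ B w w < 0)
    (G : V →ₗ[ℝ] V →ₗ[ℝ] ℝ)
    (hGsymm : ∀ v w : V, G v w = G w v)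
    (hG0 : ∀ v : V, B v v = 0 → 0 ≤ G v v) :
    (∃ a : ℝ, ∀ v : V, a * B v v ≤ G v v) ∧
    ((∀ v : V, v ≠ 0 → B v v = 0 → 0 < G v v) →
      ∃ a : ℝ, ∀ v : V, v ≠ 0 → a * B v v < G v v) :=
  stmt_2_general B hBsymm hBindef G hGsymm hG0
end

section
/- (Proposition 2.4, item 3 / Remark 2.12, non-strict case.) An invertible J-separated linear operator L : V → V is J-monotone (i.e. J(Lv) ≥ J(v) for all v ∈ V) if and only if ρ−(L) ≤ 1 and ρ+(L) ≥ 1. -/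
/-!
J-separation passes from the open cone `{J > 0}` to its closure: if `J(v) ≥ 0`, pick `z = ±v₀`
with `J(z) > 0` and `B(v, z) ≥ 0`; then `J(v + t z) > 0` for `t > 0`, hence `J(Lv + t Lz) > 0`,
and `t → 0⁺` gives `J(Lv) ≥ 0`. Applied to the two null lines of the plane spanned by `u`, `v`
with `J(u) < 0 < J(v)`, this yields Wojtkowski's inequality `J(Lu)/J(u) ≤ J(Lv)/J(v)`, so `ρ₋` is
the supremum of a bounded set. Then `ρ₋ ≤ 1` and `ρ₊ ≥ 1` say exactly that `J(Lv) ≥ J(v)` on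
negative and on positive vectors, and null vectors are covered by the closed cone.
-/

open Filter Topology

lemma nonneg_of_forall_pos_quadratic {a b c : ℝ} (h : ∀ t > 0, 0 < a + b * t + c * t ^ 2) :
    0 ≤ a := by
  have hlim : Tendsto (fun t : ℝ => a + b * t + c * t ^ 2) (𝓝[>] 0) (𝓝 a) := by
    have hcont : Continuous (fun t : ℝ => a + b * t + c * t ^ 2) := by fun_prop
    simpa using (hcont.tendsto 0).mono_left nhdsWithin_le_nhds
  exact ge_of_tendsto hlim (eventually_nhdsWithin_of_forall fun t ht => (h t ht).le)

/-- For `q = c x² + 2bxy + ay²` and `q' = c' x² + 2b'xy + a'y²`, evaluate `q'` on the two null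
lines `(-b ± r, c)` of `q`, `r² = b² - ac`, and add the results with positive weights. -/
lemma mul_le_mul_of_quadratic_nonneg_imp_nonneg {a b c a' b' c' : ℝ} (ha : a < 0) (hc : 0 < c)
    (h : ∀ x y : ℝ, 0 ≤ c * x ^ 2 + 2 * b * x * y + a * y ^ 2 →
      0 ≤ c' * x ^ 2 + 2 * b' * x * y + a' * y ^ 2) :
    c' * a ≤ a' * c := by
  set r := Real.sqrt (b ^ 2 - a * c)
  have hr2 : r ^ 2 = b ^ 2 - a * c := Real.sq_sqrt (by nlinarith [sq_nonneg b])
  obtain ⟨hbr, hbr'⟩ : -r < b ∧ b < r := by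
    rw [← abs_lt, ← Real.sqrt_sq_eq_abs]
    exact Real.sqrt_lt_sqrt (sq_nonneg b) (by nlinarith)
  have hplus := h (-b + r) c (by nlinarith)
  have hminus := h (-b - r) c (by nlinarith)
  have hcombo : 2 * r * c * (a' * c - c' * a) =
      (-b + r) * (c' * (-b - r) ^ 2 + 2 * b' * (-b - r) * c + a' * c ^ 2) +
        (b + r) * (c' * (-b + r) ^ 2 + 2 * b' * (-b + r) * c + a' * c ^ 2) := by
    linear_combination (-2 * r * c') * hr2
  have hrc : 0 < 2 * r * c := by nlinarith
  have : 0 ≤ 2 * r * c * (a' * c - c' * a) := by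
    rw [hcombo]
    exact add_nonneg (mul_nonneg (by linarith) hminus) (mul_nonneg (by linarith) hplus)
  linarith [(mul_nonneg_iff_of_pos_left hrc).mp this]

section Ratio

variable {α : Type*} (f g : α → ℝ)

lemma sSup_div_le_one_iff (hbdd : BddAbove {x : ℝ | ∃ u, g u < 0 ∧ x = f u / g u}) :
    sSup {x : ℝ | ∃ u, g u < 0 ∧ x = f u / g u} ≤ 1 ↔ ∀ u, g u < 0 → g u ≤ f u := by
  refine ⟨fun h u hu => ?_, fun h => Real.sSup_le ?_ zero_le_one⟩
  · exact (div_le_one_of_neg hu).mp ((le_csSup hbdd ⟨u, hu, rfl⟩).trans h)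
  · rintro _ ⟨u, hu, rfl⟩
    exact (div_le_one_of_neg hu).mpr (h u hu)

lemma one_le_sInf_div_iff (hne : ∃ v, 0 < g v)
    (hbdd : BddBelow {x : ℝ | ∃ v, 0 < g v ∧ x = f v / g v}) :
    1 ≤ sInf {x : ℝ | ∃ v, 0 < g v ∧ x = f v / g v} ↔ ∀ v, 0 < g v → g v ≤ f v := by
  obtain ⟨v₀, hv₀⟩ := hne
  rw [le_csInf_iff hbdd ⟨_, v₀, hv₀, rfl⟩]
  refine ⟨fun h v hv => (one_le_div hv).mp (h _ ⟨v, hv, rfl⟩), ?_⟩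
  rintro h _ ⟨v, hv, rfl⟩
  exact (one_le_div hv).mpr (h v hv)

end Ratio

section JSeparated

variable {V : Type*} [AddCommGroup V] [Module ℝ V] {B : V →ₗ[ℝ] V →ₗ[ℝ] ℝ} {L : V →ₗ[ℝ] V}

lemma apply_smul_add_smul (hBsymm : ∀ v w : V, B v w = B w v) (x y : V) (s t : ℝ) :
    B (s • x + t • y) (s • x + t • y) = B x x * s ^ 2 + 2 * B x y * s * t + B y y * t ^ 2 := by
  simp only [map_add, map_smul, LinearMap.add_apply, LinearMap.smul_apply, smul_eq_mul,
    hBsymm y x]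
  ring

lemma pos_apply_map_of_pos (hLinj : Function.Injective L)
    (hsep : ∀ v : V, 0 < B v v → 0 < B (L v) (L v) ∨ L v = 0) {v : V} (hv : 0 < B v v) :
    0 < B (L v) (L v) := by
  refine (hsep v hv).resolve_right fun h => hv.ne' ?_
  rw [hLinj (h.trans (map_zero L).symm), map_zero]

lemma nonneg_apply_map_of_nonneg (hBsymm : ∀ v w : V, B v w = B w v)
    (hLinj : Function.Injective L)
    (hsep : ∀ v : V, 0 < B v v → 0 < B (L v) (L v) ∨ L v = 0)
    {v₀ : V} (hv₀ : 0 < B v₀ v₀) {v : V} (hv : 0 ≤ B v v) :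
    0 ≤ B (L v) (L v) := by
  obtain ⟨z, hz, hvz⟩ : ∃ z, 0 < B z z ∧ 0 ≤ B v z := by
    rcases le_total 0 (B v v₀) with h | h
    · exact ⟨v₀, hv₀, h⟩
    · exact ⟨-v₀, by simpa using hv₀, by simpa using h⟩
  refine nonneg_of_forall_pos_quadratic (b := 2 * B (L v) (L z)) (c := B (L z) (L z))
    fun t ht => ?_
  have hpos : 0 < B ((1 : ℝ) • v + t • z) ((1 : ℝ) • v + t • z) := by
    rw [apply_smul_add_smul hBsymm]
    positivity
  have := pos_apply_map_of_pos hLinj hsep hpos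
  rw [map_add, map_smul, map_smul, apply_smul_add_smul hBsymm] at this
  linarith

lemma div_le_div_apply_map_of_neg_of_pos (hBsymm : ∀ v w : V, B v w = B w v)
    (hLinj : Function.Injective L)
    (hsep : ∀ v : V, 0 < B v v → 0 < B (L v) (L v) ∨ L v = 0)
    {u v : V} (hu : B u u < 0) (hv : 0 < B v v) :
    B (L u) (L u) / B u u ≤ B (L v) (L v) / B v v := by
  rw [div_le_iff_of_neg hu, div_mul_eq_mul_div, div_le_iff₀ hv]
  refine mul_le_mul_of_quadratic_nonneg_imp_nonneg (b := B v u) (b' := B (L v) (L u)) hu hv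
    fun x y hxy => ?_
  rw [← apply_smul_add_smul hBsymm] at hxy ⊢
  simpa only [map_add, map_smul] using
    nonneg_apply_map_of_nonneg hBsymm hLinj hsep hv hxy

end JSeparated

theorem stmt_5_general
    {V : Type*} [AddCommGroup V] [Module ℝ V]
    (B : V →ₗ[ℝ] V →ₗ[ℝ] ℝ)
    (hBsymm : ∀ v w : V, B v w = B w v)
    (hBindef : ∃ v w : V, 0 < B v v ∧ B w w < 0)
    (L : V →ₗ[ℝ] V)
    (hL : Function.Bijective L)
    (hsep : ∀ v : V, 0 < B v v → 0 < B (L v) (L v) ∨ L v = 0) :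
    (∀ v : V, B v v ≤ B (L v) (L v)) ↔
      (sSup {x : ℝ | ∃ u : V, B u u < 0 ∧ x = B (L u) (L u) / B u u} ≤ 1 ∧
       1 ≤ sInf {x : ℝ | ∃ v : V, 0 < B v v ∧ x = B (L v) (L v) / B v v}) := by
  obtain ⟨v₀, -, hv₀, -⟩ := hBindef
  have hbddAbove : BddAbove {x : ℝ | ∃ u : V, B u u < 0 ∧ x = B (L u) (L u) / B u u} := by
    refine ⟨B (L v₀) (L v₀) / B v₀ v₀, ?_⟩
    rintro _ ⟨u, hu, rfl⟩
    exact div_le_div_apply_map_of_neg_of_pos hBsymm hL.1 hsep hu hv₀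
  have hbddBelow : BddBelow {x : ℝ | ∃ v : V, 0 < B v v ∧ x = B (L v) (L v) / B v v} := by
    refine ⟨0, ?_⟩
    rintro _ ⟨v, hv, rfl⟩
    exact (div_pos (pos_apply_map_of_pos hL.1 hsep hv) hv).le
  rw [sSup_div_le_one_iff (fun v => B (L v) (L v)) (fun v => B v v) hbddAbove,
    one_le_sInf_div_iff (fun v => B (L v) (L v)) (fun v => B v v) ⟨v₀, hv₀⟩ hbddBelow]
  refine ⟨fun h => ⟨fun u _ => h u, fun v _ => h v⟩, fun ⟨hneg, hpos⟩ v => ?_⟩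
  rcases lt_trichotomy (B v v) 0 with hv | hv | hv
  · exact hneg v hv
  · exact hv ▸ nonneg_apply_map_of_nonneg hBsymm hL.1 hsep hv₀ hv.ge
  · exact hpos v hv

/-- Proposition 2.4, item 3 / Remark 2.12 (non-strict case): an invertible
J-separated operator `L` is J-monotone (`J(Lv) ≥ J(v)` for all `v`) if and only if
`ρ₋(L) = sup_{J(u)<0} J(Lu)/J(u) ≤ 1` and `ρ₊(L) = inf_{J(v)>0} J(Lv)/J(v) ≥ 1`. -/
theorem stmt_5
    {V : Type*} [AddCommGroup V] [Module ℝ V] [FiniteDimensional ℝ V]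
    (B : V →ₗ[ℝ] V →ₗ[ℝ] ℝ)
    (hBsymm : ∀ v w : V, B v w = B w v)
    (hBnd : ∀ v : V, (∀ w : V, B v w = 0) → v = 0)
    (hBindef : ∃ v w : V, 0 < B v v ∧ B w w < 0)
    (L : V →ₗ[ℝ] V)
    (hL : Function.Bijective L)
    (hsep : ∀ v : V, 0 < B v v → 0 < B (L v) (L v) ∨ L v = 0) :
    (∀ v : V, B v v ≤ B (L v) (L v)) ↔
      (sSup {x : ℝ | ∃ u : V, B u u < 0 ∧ x = B (L u) (L u) / B u u} ≤ 1 ∧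
       1 ≤ sInf {x : ℝ | ∃ v : V, 0 < B v v ∧ x = B (L v) (L v) / B v v}) :=
  stmt_5_general B hBsymm hBindef L hL hsep
end

section
/- (Proposition 2.4, item 3 / Remark 2.12, strict case.) An invertible strictly J-separated linear operator L : V → V is strictly J-monotone (i.e. J(Lv) > J(v) for all nonzero v ∈ V) if and only if ρ−(L) < 1 and ρ+(L) > 1. -/
/-!
If `J∘L - J` is positive definite, compactness of the unit sphere (for any norm) gives `δ > 0`
with `J(Lv) - J(v) ≥ δ |J(v)|`, which pushes the ratios `J(Lv)/J(v)` below `1 - δ` on the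
negative cone and above `1 + δ` on the positive cone. Conversely, `ρ₊ > 1` and `ρ₋ < 1` give
`J(Lv) > J(v)` off the null cone, while strict separation handles the null cone. The only subtle
point is that `ρ₋` is a genuine supremum: the ratios over the negative cone are bounded above,
again by compactness, because `J∘L > 0` on the null cone (a Finsler-type lemma).
-/

open Metric

theorem IsCompact.exists_nat_pos_add_mul {X : Type*} [TopologicalSpace X] {K : Set X}
    (hK : IsCompact K) {g h : X → ℝ} (hg : Continuous g) (hh : Continuous h)
    (h_nonneg : ∀ x, 0 ≤ h x) (hpos : ∀ x ∈ K, 0 < g x ∨ 0 < h x) :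
    ∃ n : ℕ, ∀ x ∈ K, 0 < g x + n * h x := by
  let U : ℕ → Set X := fun n => {x | 0 < g x + n * h x}
  have hU_open : ∀ n, IsOpen (U n) := fun n =>
    isOpen_lt continuous_const (hg.add (continuous_const.mul hh))
  have hU_mono : Monotone U := fun m n hmn x (hx : 0 < g x + m * h x) => by
    have : (m : ℝ) * h x ≤ n * h x :=
      mul_le_mul_of_nonneg_right (by exact_mod_cast hmn) (h_nonneg x)
    show 0 < g x + n * h x
    linarith
  have hcover : K ⊆ ⋃ n, U n := by
    intro x hx
    rcases hpos x hx with hgx | hhx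
    · exact Set.mem_iUnion.2 ⟨0, by simpa [U] using hgx⟩
    · obtain ⟨n, hn⟩ := exists_nat_gt (-g x / h x)
      refine Set.mem_iUnion.2 ⟨n, ?_⟩
      have := (div_lt_iff₀ hhx).1 hn
      show 0 < g x + n * h x
      linarith
  exact hK.elim_directed_cover U hU_open hcover hU_mono.directed_le

theorem exists_nat_pos_add_mul_of_homogeneous {E : Type*} [NormedAddCommGroup E]
    [NormedSpace ℝ E] [FiniteDimensional ℝ E] {g h : E → ℝ} (hg : Continuous g)
    (hh : Continuous h) (hg_smul : ∀ (c : ℝ) x, g (c • x) = c ^ 2 * g x)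
    (hh_smul : ∀ (c : ℝ) x, h (c • x) = c ^ 2 * h x) (h_nonneg : ∀ x, 0 ≤ h x)
    (hpos : ∀ x ≠ 0, 0 < g x ∨ 0 < h x) :
    ∃ n : ℕ, ∀ x ≠ 0, 0 < g x + n * h x := by
  obtain ⟨n, hn⟩ := (isCompact_sphere (0 : E) 1).exists_nat_pos_add_mul hg hh h_nonneg
    fun x hx => hpos x (ne_zero_of_mem_unit_sphere ⟨x, hx⟩)
  refine ⟨n, fun x hx => ?_⟩
  have hx_norm : 0 < ‖x‖ := norm_pos_iff.2 hx
  set y := ‖x‖⁻¹ • x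
  have hy : y ∈ sphere (0 : E) 1 := by
    simp [y, norm_smul, hx_norm.ne']
  have hxy : x = ‖x‖ • y := by simp [y, smul_smul, hx_norm.ne']
  rw [hxy, hg_smul, hh_smul]
  nlinarith [hn y hy, pow_pos hx_norm 2]

namespace LinearMap

variable {V : Type*} [AddCommGroup V] [Module ℝ V] [FiniteDimensional ℝ V]

theorem continuous_apply_self {E : Type*} [NormedAddCommGroup E] [NormedSpace ℝ E]
    [FiniteDimensional ℝ E] (b : E →ₗ[ℝ] E →ₗ[ℝ] ℝ) : Continuous fun x => b x x :=
  b.toContinuousBilinearMap.continuous₂.comp (continuous_id.prodMk continuous_id)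

theorem exists_pos_mul_abs_le_of_pos (b d : V →ₗ[ℝ] V →ₗ[ℝ] ℝ) (hd : ∀ v ≠ 0, 0 < d v v) :
    ∃ δ > 0, ∀ v, δ * |b v v| ≤ d v v := by
  let e := (Module.finBasis ℝ V).equivFun
  let _ : NormedAddCommGroup V := NormedAddCommGroup.induced V _ e e.injective
  let _ : NormedSpace ℝ V := NormedSpace.induced ℝ V _ e
  obtain ⟨n, hn⟩ := exists_nat_pos_add_mul_of_homogeneous (g := fun v => d v v - |b v v|)
    (h := fun v => d v v) ((d.continuous_apply_self).sub (b.continuous_apply_self).abs)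
    d.continuous_apply_self
    (fun c v => by
      simp only [map_smul, smul_apply, smul_eq_mul, abs_mul]
      linear_combination (-|b v v|) * abs_mul_abs_self c)
    (fun c v => by simp only [map_smul, smul_apply, smul_eq_mul]; ring)
    (fun v => by rcases eq_or_ne v 0 with rfl | hv; exacts [by simp, (hd v hv).le])
    (fun v hv => .inr (hd v hv))
  refine ⟨((n : ℝ) + 1)⁻¹, by positivity, fun v => ?_⟩
  rcases eq_or_ne v 0 with rfl | hv
  · simp
  rw [inv_mul_le_iff₀ (by positivity)]
  linarith [hn v hv]

theorem exists_mul_le_of_pos_of_nonneg (b d : V →ₗ[ℝ] V →ₗ[ℝ] ℝ)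
    (hd : ∀ v ≠ 0, 0 ≤ b v v → 0 < d v v) : ∃ M : ℝ, ∀ v, b v v < 0 → M * b v v ≤ d v v := by
  let e := (Module.finBasis ℝ V).equivFun
  let _ : NormedAddCommGroup V := NormedAddCommGroup.induced V _ e e.injective
  let _ : NormedSpace ℝ V := NormedSpace.induced ℝ V _ e
  obtain ⟨n, hn⟩ := exists_nat_pos_add_mul_of_homogeneous (g := fun v => d v v)
    (h := fun v => max (-b v v) 0) d.continuous_apply_self
    ((b.continuous_apply_self).neg.max continuous_const)
    (fun c v => by simp only [map_smul, smul_apply, smul_eq_mul]; ring)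
    (fun c v => by
      simp only [map_smul, smul_apply, smul_eq_mul]
      rw [mul_max_of_nonneg _ _ (sq_nonneg c), mul_zero, mul_neg, sq, mul_assoc])
    (fun v => le_max_right _ _)
    (fun v hv => by
      rcases le_or_gt 0 (b v v) with hb | hb
      exacts [.inl (hd v hv hb), .inr (lt_max_of_lt_left (neg_pos.2 hb))])
  refine ⟨n, fun v hv => ?_⟩
  have hv0 : v ≠ 0 := by rintro rfl; simp at hv
  have := hn v hv0
  rw [max_eq_left (neg_nonneg.2 hv.le)] at this
  linarith

end LinearMap

section Ratios

variable {α : Type*} (q p : α → ℝ) {c : ℝ}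

theorem csSup_div_le (hne : ∃ u, q u < 0) (h : ∀ u, q u < 0 → c * q u ≤ p u) :
    sSup {x : ℝ | ∃ u, q u < 0 ∧ x = p u / q u} ≤ c := by
  obtain ⟨u₀, hu₀⟩ := hne
  refine csSup_le ⟨_, u₀, hu₀, rfl⟩ ?_
  rintro _ ⟨u, hu, rfl⟩
  exact (div_le_iff_of_neg hu).2 (h u hu)

theorem le_csInf_div (hne : ∃ v, 0 < q v) (h : ∀ v, 0 < q v → c * q v ≤ p v) :
    c ≤ sInf {x : ℝ | ∃ v, 0 < q v ∧ x = p v / q v} := by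
  obtain ⟨v₀, hv₀⟩ := hne
  refine le_csInf ⟨_, v₀, hv₀, rfl⟩ ?_
  rintro _ ⟨v, hv, rfl⟩
  exact (le_div_iff₀ hv).2 (h v hv)

theorem mul_lt_of_csSup_div_lt {u : α} (hbdd : ∃ M, ∀ u, q u < 0 → M * q u ≤ p u)
    (hu : q u < 0) (hlt : sSup {x : ℝ | ∃ u, q u < 0 ∧ x = p u / q u} < c) :
    c * q u < p u := by
  obtain ⟨M, hM⟩ := hbdd
  have hbdd' : BddAbove {x : ℝ | ∃ u, q u < 0 ∧ x = p u / q u} := by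
    refine ⟨M, ?_⟩
    rintro _ ⟨u, hu, rfl⟩
    exact (div_le_iff_of_neg hu).2 (hM u hu)
  exact (div_lt_iff_of_neg hu).1 ((le_csSup hbdd' ⟨u, hu, rfl⟩).trans_lt hlt)

theorem mul_lt_of_lt_csInf_div {v : α} (hbdd : ∃ m, ∀ v, 0 < q v → m * q v ≤ p v)
    (hv : 0 < q v) (hlt : c < sInf {x : ℝ | ∃ v, 0 < q v ∧ x = p v / q v}) :
    c * q v < p v := by
  obtain ⟨m, hm⟩ := hbdd
  have hbdd' : BddBelow {x : ℝ | ∃ v, 0 < q v ∧ x = p v / q v} := by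
    refine ⟨m, ?_⟩
    rintro _ ⟨v, hv, rfl⟩
    exact (le_div_iff₀ hv).2 (hm v hv)
  exact (lt_div_iff₀ hv).1 (hlt.trans_le (csInf_le hbdd' ⟨v, hv, rfl⟩))

end Ratios

theorem stmt_6_general
    {V : Type*} [AddCommGroup V] [Module ℝ V] [FiniteDimensional ℝ V]
    (B : V →ₗ[ℝ] V →ₗ[ℝ] ℝ)
    (hBindef : ∃ v w : V, 0 < B v v ∧ B w w < 0)
    (L : V →ₗ[ℝ] V)
    (hsep : ∀ v : V, v ≠ 0 → 0 ≤ B v v → 0 < B (L v) (L v)) :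
    (∀ v : V, v ≠ 0 → B v v < B (L v) (L v)) ↔
      (sSup {x : ℝ | ∃ u : V, B u u < 0 ∧ x = B (L u) (L u) / B u u} < 1 ∧
       1 < sInf {x : ℝ | ∃ v : V, 0 < B v v ∧ x = B (L v) (L v) / B v v}) := by
  obtain ⟨v₀, w₀, hv₀, hw₀⟩ := hBindef
  let q : V → ℝ := fun v => B v v
  let p : V → ℝ := fun v => B (L v) (L v)
  constructor
  · intro hmono
    obtain ⟨δ, hδ, hδ_le⟩ := B.exists_pos_mul_abs_le_of_pos (B.compl₁₂ L L - B)
      fun v hv => by simpa using sub_pos.2 (hmono v hv)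
    have hgap : ∀ v, δ * |q v| ≤ p v - q v := fun v => by simpa [q, p] using hδ_le v
    constructor
    · calc _ ≤ 1 - δ := csSup_div_le q p ⟨w₀, hw₀⟩ fun u hu => by
            have := hgap u
            rw [abs_of_neg hu] at this
            linarith
        _ < 1 := by linarith
    · calc 1 < 1 + δ := by linarith
        _ ≤ _ := le_csInf_div q p ⟨v₀, hv₀⟩ fun v hv => by
            have := hgap v
            rw [abs_of_pos hv] at this
            linarith
  · rintro ⟨hsup, hinf⟩ v hv
    have hbdd_above := B.exists_mul_le_of_pos_of_nonneg (B.compl₁₂ L L) hsep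
    have hbdd_below : ∃ m, ∀ v, 0 < q v → m * q v ≤ p v :=
      ⟨0, fun v hv => by simpa using (hsep v (by rintro rfl; simp [q] at hv) hv.le).le⟩
    rcases lt_trichotomy (q v) 0 with hneg | hzero | hpos
    · simpa using mul_lt_of_csSup_div_lt q p hbdd_above hneg hsup
    · linarith [hsep v hv hzero.ge, show B v v = 0 from hzero]
    · simpa using mul_lt_of_lt_csInf_div q p hbdd_below hpos hinf

/-- Proposition 2.4, item 3 / Remark 2.12 (strict case): an invertible strictly
J-separated operator `L` is strictly J-monotone (`J(Lv) > J(v)` for all nonzero `v`)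
if and only if `ρ₋(L) = sup_{J(u)<0} J(Lu)/J(u) < 1` and
`ρ₊(L) = inf_{J(v)>0} J(Lv)/J(v) > 1`. -/
theorem stmt_6
    {V : Type*} [AddCommGroup V] [Module ℝ V] [FiniteDimensional ℝ V]
    (B : V →ₗ[ℝ] V →ₗ[ℝ] ℝ)
    (hBsymm : ∀ v w : V, B v w = B w v)
    (hBnd : ∀ v : V, (∀ w : V, B v w = 0) → v = 0)
    (hBindef : ∃ v w : V, 0 < B v v ∧ B w w < 0)
    (L : V →ₗ[ℝ] V)
    (hL : Function.Bijective L)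
    (hsep : ∀ v : V, v ≠ 0 → 0 ≤ B v v → 0 < B (L v) (L v)) :
    (∀ v : V, v ≠ 0 → B v v < B (L v) (L v)) ↔
      (sSup {x : ℝ | ∃ u : V, B u u < 0 ∧ x = B (L u) (L u) / B u u} < 1 ∧
       1 < sInf {x : ℝ | ∃ v : V, 0 < B v v ∧ x = B (L v) (L v) / B v v}) :=
  stmt_6_general B hBindef L hsep
end

section
/- (Proposition 2.10, supermultiplicativity of volume expansion.) If L1, L2 : V → V are invertible J-separated linear operators and 1 ≤ d ≤ p, then σ_d(L1 ∘ L2) ≥ σ_d(L1) · σ_d(L2). -/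
/-- The maximal dimension `p` of a subspace of `V` on which the quadratic form
`J(v) = B v v` is positive definite. -/
noncomputable def posIndex {V : Type*} [AddCommGroup V] [Module ℝ V]
    (B : V →ₗ[ℝ] V →ₗ[ℝ] ℝ) : ℕ :=
  sSup {k : ℕ | ∃ W : Submodule ℝ V, Module.finrank ℝ W = k ∧
    ∀ v ∈ W, v ≠ 0 → 0 < B v v}

/-- `σ_d(L)`: the infimum, over all `d`-dimensional subspaces `W` of `V` contained
(up to `0`) in the positive cone of `J`, of the rate of volume expansion
`α_d(L; W) = sqrt( det(B(Lwᵢ, Lwⱼ)) / det(B(wᵢ, wⱼ)) )` of `L` on `W`, computed with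
respect to any basis `w₁, …, w_d` of `W` (the quotient of Gram determinants does not
depend on the choice of basis). -/
noncomputable def sigmaVol {V : Type*} [AddCommGroup V] [Module ℝ V]
    (B : V →ₗ[ℝ] V →ₗ[ℝ] ℝ) (L : V →ₗ[ℝ] V) (d : ℕ) : ℝ :=
  sInf {x : ℝ | ∃ W : Submodule ℝ V, Module.finrank ℝ W = d ∧
    (∀ v ∈ W, v ≠ 0 → 0 < B v v) ∧
    ∃ b : Module.Basis (Fin d) ℝ W,
      x = Real.sqrt
        ((Matrix.of fun i j => B (L (b i : V)) (L (b j : V))).det /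
         (Matrix.of fun i j => B (b i : V) (b j : V)).det)}

/-!
Pushing an admissible `d`-plane `W` forward by `L₂` gives an admissible plane `L₂ W`, since `L₂` is
injective and maps the positive cone into itself. The Gram-determinant ratio of `L₁ ∘ L₂` on `W`
telescopes into the ratio of `L₁` on `L₂ W` times the ratio of `L₂` on `W`, which bound
`σ_d(L₁)` and `σ_d(L₂)` from above; taking the infimum over `W` gives the claim. If there is no
admissible plane at all, every `σ_d` is `sInf ∅ = 0`.
-/

section GramMatrix

variable {V : Type*} [AddCommGroup V] [Module ℝ V] {B : V →ₗ[ℝ] V →ₗ[ℝ] ℝ}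

lemma gram_posDef {ι : Type*} [Fintype ι] [DecidableEq ι] (hBsymm : ∀ v w : V, B v w = B w v)
    {W : Submodule ℝ V} (hW : ∀ v ∈ W, v ≠ 0 → 0 < B v v) (b : Module.Basis ι ℝ W) :
    (Matrix.of fun i j => B (b i : V) (b j : V)).PosDef := by
  have hmatrix : LinearMap.BilinForm.toMatrix b (B.compl₁₂ W.subtype W.subtype) =
      Matrix.of fun i j => B (b i : V) (b j : V) := by
    ext i j
    simp [LinearMap.BilinForm.toMatrix_apply]
  rw [← hmatrix, ← LinearMap.BilinForm.posDef_toQuadraticMap_iff_matrix b _ ⟨fun v w => hBsymm v w⟩]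
  exact fun v hv => hW v v.2 (by simpa using hv)

lemma map_pos_of_separated {L : V →ₗ[ℝ] V}
    (hsep : ∀ v : V, 0 < B v v → 0 < B (L v) (L v) ∨ L v = 0)
    {W : Submodule ℝ V} (hW : ∀ v ∈ W, v ≠ 0 → 0 < B v v) :
    ∀ v ∈ W.map L, v ≠ 0 → 0 < B v v := by
  rintro _ ⟨w, hw, rfl⟩ hLw
  exact (hsep w (hW w hw fun h => hLw (by rw [h, map_zero]))).resolve_right hLw

end GramMatrix

section SigmaVol

variable {V : Type*} [AddCommGroup V] [Module ℝ V] (B : V →ₗ[ℝ] V →ₗ[ℝ] ℝ) (L : V →ₗ[ℝ] V)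
  {d : ℕ}

lemma sigmaVol_nonneg : 0 ≤ sigmaVol B L d :=
  Real.sInf_nonneg <| by
    rintro x ⟨W, -, -, b, rfl⟩
    exact Real.sqrt_nonneg _

lemma sigmaVol_le {W : Submodule ℝ V} (hd : Module.finrank ℝ W = d)
    (hW : ∀ v ∈ W, v ≠ 0 → 0 < B v v) (b : Module.Basis (Fin d) ℝ W) :
    sigmaVol B L d ≤ Real.sqrt
      ((Matrix.of fun i j => B (L (b i : V)) (L (b j : V))).det /
       (Matrix.of fun i j => B (b i : V) (b j : V)).det) :=
  csInf_le ⟨0, by rintro x ⟨W, -, -, b, rfl⟩; exact Real.sqrt_nonneg _⟩ ⟨W, hd, hW, b, rfl⟩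

lemma le_sigmaVol {x : ℝ}
    (hne : ∃ W : Submodule ℝ V, Module.finrank ℝ W = d ∧ (∀ v ∈ W, v ≠ 0 → 0 < B v v) ∧
      Nonempty (Module.Basis (Fin d) ℝ W))
    (hle : ∀ W : Submodule ℝ V, Module.finrank ℝ W = d → (∀ v ∈ W, v ≠ 0 → 0 < B v v) →
      ∀ b : Module.Basis (Fin d) ℝ W, x ≤ Real.sqrt
        ((Matrix.of fun i j => B (L (b i : V)) (L (b j : V))).det /
         (Matrix.of fun i j => B (b i : V) (b j : V)).det)) :
    x ≤ sigmaVol B L d := by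
  obtain ⟨W, hd, hW, ⟨b⟩⟩ := hne
  refine le_csInf ⟨_, W, hd, hW, b, rfl⟩ ?_
  rintro _ ⟨W, hd, hW, b, rfl⟩
  exact hle W hd hW b

lemma sigmaVol_eq_zero
    (hempty : ¬∃ W : Submodule ℝ V, Module.finrank ℝ W = d ∧ (∀ v ∈ W, v ≠ 0 → 0 < B v v) ∧
      Nonempty (Module.Basis (Fin d) ℝ W)) :
    sigmaVol B L d = 0 := by
  refine (congrArg sInf (Set.eq_empty_of_forall_notMem ?_)).trans Real.sInf_empty
  rintro _ ⟨W, hd, hW, b, -⟩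
  exact hempty ⟨W, hd, hW, ⟨b⟩⟩

end SigmaVol

lemma sigmaVol_mul_sigmaVol_le {V : Type*} [AddCommGroup V] [Module ℝ V]
    {B : V →ₗ[ℝ] V →ₗ[ℝ] ℝ} (hBsymm : ∀ v w : V, B v w = B w v) (L₁ : V →ₗ[ℝ] V)
    {L₂ : V →ₗ[ℝ] V} (hL₂ : Function.Injective L₂)
    (hsep₂ : ∀ v : V, 0 < B v v → 0 < B (L₂ v) (L₂ v) ∨ L₂ v = 0)
    {d : ℕ} {W : Submodule ℝ V} (hd : Module.finrank ℝ W = d)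
    (hW : ∀ v ∈ W, v ≠ 0 → 0 < B v v) (b : Module.Basis (Fin d) ℝ W) :
    sigmaVol B L₁ d * sigmaVol B L₂ d ≤ Real.sqrt
      ((Matrix.of fun i j => B ((L₁ ∘ₗ L₂) (b i : V)) ((L₁ ∘ₗ L₂) (b j : V))).det /
       (Matrix.of fun i j => B (b i : V) (b j : V)).det) := by
  let e := Submodule.equivMapOfInjective L₂ hL₂ W
  have hW₂ := map_pos_of_separated hsep₂ hW
  have hd₂ : Module.finrank ℝ (W.map L₂) = d := e.finrank_eq.symm.trans hd
  have he (i : Fin d) : (b.map e i : V) = L₂ (b i) := rfl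
  have hσ₁ := sigmaVol_le B L₁ hd₂ hW₂ (b.map e)
  have hσ₂ := sigmaVol_le B L₂ hd hW b
  have hg₂ := (gram_posDef hBsymm hW₂ (b.map e)).det_pos
  have hg := (gram_posDef hBsymm hW b).det_pos
  simp only [he] at hσ₁ hg₂
  calc sigmaVol B L₁ d * sigmaVol B L₂ d
      ≤ _ * _ := mul_le_mul hσ₁ hσ₂ (sigmaVol_nonneg B L₂) (Real.sqrt_nonneg _)
    _ = _ := by
      rw [← Real.sqrt_mul' _ (div_pos hg₂ hg).le, div_mul_div_cancel₀ hg₂.ne']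
      rfl

theorem stmt_7_general
    {V : Type*} [AddCommGroup V] [Module ℝ V]
    (B : V →ₗ[ℝ] V →ₗ[ℝ] ℝ)
    (hBsymm : ∀ v w : V, B v w = B w v)
    (L₁ L₂ : V →ₗ[ℝ] V)
    (hL₂ : Function.Bijective L₂)
    (hsep₂ : ∀ v : V, 0 < B v v → 0 < B (L₂ v) (L₂ v) ∨ L₂ v = 0)
    (d : ℕ) :
    sigmaVol B L₁ d * sigmaVol B L₂ d ≤ sigmaVol B (L₁ ∘ₗ L₂) d := by
  by_cases hadm : ∃ W : Submodule ℝ V, Module.finrank ℝ W = d ∧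
      (∀ v ∈ W, v ≠ 0 → 0 < B v v) ∧ Nonempty (Module.Basis (Fin d) ℝ W)
  · exact le_sigmaVol B _ hadm fun W hd hW b =>
      sigmaVol_mul_sigmaVol_le hBsymm L₁ hL₂.injective hsep₂ hd hW b
  · rw [sigmaVol_eq_zero B L₂ hadm, mul_zero]
    exact sigmaVol_nonneg B _

/-- Proposition 2.10 (supermultiplicativity of volume expansion): if `L₁, L₂` are
invertible J-separated operators and `1 ≤ d ≤ p`, then
`σ_d(L₁ ∘ L₂) ≥ σ_d(L₁) · σ_d(L₂)`. -/
theorem stmt_7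
    {V : Type*} [AddCommGroup V] [Module ℝ V] [FiniteDimensional ℝ V]
    (B : V →ₗ[ℝ] V →ₗ[ℝ] ℝ)
    (hBsymm : ∀ v w : V, B v w = B w v)
    (hBnd : ∀ v : V, (∀ w : V, B v w = 0) → v = 0)
    (hBindef : ∃ v w : V, 0 < B v v ∧ B w w < 0)
    (L₁ L₂ : V →ₗ[ℝ] V)
    (hL₁ : Function.Bijective L₁)
    (hL₂ : Function.Bijective L₂)
    (hsep₁ : ∀ v : V, 0 < B v v → 0 < B (L₁ v) (L₁ v) ∨ L₁ v = 0)
    (hsep₂ : ∀ v : V, 0 < B v v → 0 < B (L₂ v) (L₂ v) ∨ L₂ v = 0)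
    (d : ℕ) (hd1 : 1 ≤ d) (hdp : d ≤ posIndex B) :
    sigmaVol B L₁ d * sigmaVol B L₂ d ≤ sigmaVol B (L₁ ∘ₗ L₂) d :=
  stmt_7_general B hBsymm L₁ L₂ hL₂ hsep₂ d
end

section
/- (Lemma 4.2: the flow direction lies in the non-contracted subbundle.) Let X : ℝⁿ → ℝⁿ be a C¹ vector field, and let φ : ℝ × ℝⁿ → ℝⁿ be a C¹ complete flow generated by X, i.e. φ(0, x) = x, φ(s + t, x) = φ(s, φ(t, x)) for all s, t ∈ ℝ, and (d/dt) φ(t, x) = X(φ(t, x)) for all t, x. Let Λ ⊆ ℝⁿ be a compact set invariant under the flow (φ(t, ·)(Λ) = Λ for all t ∈ ℝ). Suppose π : Λ → L(ℝⁿ, ℝⁿ) is a continuous family of linear projections (π(x) ∘ π(x) = π(x) for all x ∈ Λ) defining a splitting E(x) = range π(x), F(x) = ker π(x), which is invariant under the derivative of the flow: Dφ_t(x) ∘ π(x) = π(φ(t, x)) ∘ Dφ_t(x) for all x ∈ Λ and t ∈ ℝ, where Dφ_t(x) denotes the derivative of the map φ(t, ·) at x. Assume further that E is uniformly contracted: there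 exist constants K > 0 and λ > 0 such that ‖Dφ_t(x) v‖ ≤ K e^{−λ t} ‖v‖ for all x ∈ Λ, all v ∈ E(x) and all t ≥ 0. Then X(x) ∈ F(x), i.e. π(x)(X(x)) = 0, for every x ∈ Λ. -/
/-!
Differentiating the group law `φ t (φ s y) = φ s (φ t y)` in `s` at `s = 0` shows that
`Dφ_t(y)` carries `X(y)` to `X(φ_t y)`, so by invariance of the splitting the section
`y ↦ π(y) X(y)` of `E` is carried along the flow by `Dφ_t`. This section is bounded on the
compact set `Λ`, and every `x ∈ Λ` is `φ_t y` for some `y ∈ Λ`, so `‖π(x) X(x)‖ ≤ K e^{-λt} sup_Λ ‖π X‖`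
for every `t ≥ 0`, and letting `t → ∞` gives `π(x) X(x) = 0`.
-/

open Filter Topology

theorem nonpos_of_forall_le_mul_exp_neg {a c lam : ℝ} (hlam : 0 < lam)
    (h : ∀ t : ℝ, 0 ≤ t → a ≤ c * Real.exp (-lam * t)) : a ≤ 0 := by
  have hdecay : Tendsto (fun t : ℝ => c * Real.exp (-lam * t)) atTop (𝓝 0) := by
    have := (Real.tendsto_exp_neg_atTop_nhds_zero.comp
      (tendsto_id.const_mul_atTop hlam)).const_mul c
    simpa [Function.comp_def, neg_mul] using this
  exact ge_of_tendsto hdecay (eventually_ge_atTop 0 |>.mono h)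

theorem eq_zero_of_norm_le_mul_exp_neg_along_flow {α F : Type*} [NormedAddCommGroup F]
    {φ : ℝ → α → α} {Λ : Set α} {v : α → F} {K lam : ℝ}
    (hΛ : ∀ t : ℝ, 0 ≤ t → Λ ⊆ φ t '' Λ) (hv : Bornology.IsBounded (v '' Λ)) (hlam : 0 < lam)
    (hdecay : ∀ y ∈ Λ, ∀ t : ℝ, 0 ≤ t → ‖v (φ t y)‖ ≤ K * Real.exp (-lam * t) * ‖v y‖) :
    ∀ x ∈ Λ, v x = 0 := by
  obtain ⟨C, hC⟩ := isBounded_iff_forall_norm_le.mp hv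
  intro x hx
  refine norm_le_zero_iff.mp (nonpos_of_forall_le_mul_exp_neg (c := |K| * C) hlam fun t ht => ?_)
  obtain ⟨y, hy, rfl⟩ := hΛ t ht hx
  calc ‖v (φ t y)‖ ≤ K * Real.exp (-lam * t) * ‖v y‖ := hdecay y hy t ht
    _ ≤ |K| * Real.exp (-lam * t) * ‖v y‖ := by gcongr; exact le_abs_self K
    _ ≤ |K| * Real.exp (-lam * t) * C := by gcongr; exact hC _ (Set.mem_image_of_mem v hy)
    _ = |K| * C * Real.exp (-lam * t) := by ring

theorem HasFDerivAt.apply_vectorField_of_isFlow {E : Type*} [NormedAddCommGroup E]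
    [NormedSpace ℝ E] {φ : ℝ → E → E} {X : E → E} {L : E →L[ℝ] E} {t : ℝ} {y : E}
    (hφ0 : ∀ x, φ 0 x = x) (hφadd : ∀ s t : ℝ, ∀ x, φ (s + t) x = φ s (φ t x))
    (hφX : ∀ x, HasDerivAt (fun s : ℝ => φ s x) (X x) 0) (hL : HasFDerivAt (φ t) L y) :
    L (X y) = X (φ t y) := by
  have hcomm : (fun s : ℝ => φ t (φ s y)) = fun s : ℝ => φ s (φ t y) := by
    funext s
    rw [← hφadd, add_comm, hφadd]
  have hchain : HasDerivAt (fun s : ℝ => φ t (φ s y)) (L (X y)) 0 :=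
    (hφ0 y ▸ hL).comp_hasDerivAt 0 (hφX y)
  exact hchain.unique (hcomm ▸ hφX (φ t y))

theorem stmt_12_general
    {n : ℕ}
    (X : EuclideanSpace ℝ (Fin n) → EuclideanSpace ℝ (Fin n))
    (hX : ContDiff ℝ 1 X)
    (φ : ℝ → EuclideanSpace ℝ (Fin n) → EuclideanSpace ℝ (Fin n))
    (Dφ : ℝ → EuclideanSpace ℝ (Fin n) →
      (EuclideanSpace ℝ (Fin n) →L[ℝ] EuclideanSpace ℝ (Fin n)))
    (hφ0 : ∀ x, φ 0 x = x)
    (hφadd : ∀ s t : ℝ, ∀ x, φ (s + t) x = φ s (φ t x))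
    (hφX : ∀ (t : ℝ) (x : EuclideanSpace ℝ (Fin n)),
      HasDerivAt (fun s : ℝ => φ s x) (X (φ t x)) t)
    (hDφ : ∀ (t : ℝ) (x : EuclideanSpace ℝ (Fin n)), HasFDerivAt (φ t) (Dφ t x) x)
    (Λ : Set (EuclideanSpace ℝ (Fin n)))
    (hΛcomp : IsCompact Λ)
    (hΛinv : ∀ t : ℝ, φ t '' Λ = Λ)
    (P : EuclideanSpace ℝ (Fin n) →
      (EuclideanSpace ℝ (Fin n) →L[ℝ] EuclideanSpace ℝ (Fin n)))
    (hPcont : ContinuousOn P Λ)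
    (hPinv : ∀ x ∈ Λ, ∀ t : ℝ, (Dφ t x).comp (P x) = (P (φ t x)).comp (Dφ t x))
    (K lam : ℝ) (hlam : 0 < lam)
    (hcontr : ∀ x ∈ Λ, ∀ v ∈ Set.range (P x), ∀ t : ℝ, 0 ≤ t →
      ‖Dφ t x v‖ ≤ K * Real.exp (-lam * t) * ‖v‖) :
    ∀ x ∈ Λ, P x (X x) = 0 := by
  have hφX₀ : ∀ x, HasDerivAt (fun s : ℝ => φ s x) (X x) 0 := fun x => by
    simpa only [hφ0] using hφX 0 x
  have hsection_inv : ∀ y ∈ Λ, ∀ t : ℝ, Dφ t y (P y (X y)) = P (φ t y) (X (φ t y)) := by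
    intro y hy t
    rw [← (hDφ t y).apply_vectorField_of_isFlow hφ0 hφadd hφX₀]
    exact congrArg (fun L => L (X y)) (hPinv y hy t)
  have hbdd : Bornology.IsBounded ((fun y => P y (X y)) '' Λ) :=
    (hΛcomp.image_of_continuousOn (hPcont.clm_apply hX.continuous.continuousOn)).isBounded
  refine eq_zero_of_norm_le_mul_exp_neg_along_flow (K := K) (fun t _ => (hΛinv t).ge) hbdd hlam ?_
  intro y hy t ht
  rw [← hsection_inv y hy t]
  exact hcontr y hy _ ⟨X y, rfl⟩ t ht

/-- Lemma 4.2 (the flow direction lies in the non-contracted subbundle): let `φ` be a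
C¹ complete flow on ℝⁿ generated by a C¹ vector field `X`, `Λ` a compact invariant
set, and `P : Λ → L(ℝⁿ, ℝⁿ)` a continuous family of projections defining a
`Dφ`-invariant splitting `E(x) = range P(x)`, `F(x) = ker P(x)` in which `E` is
uniformly contracted. Then `X(x) ∈ F(x)`, i.e. `P(x)(X(x)) = 0`, for all `x ∈ Λ`. -/
theorem stmt_12
    {n : ℕ}
    (X : EuclideanSpace ℝ (Fin n) → EuclideanSpace ℝ (Fin n))
    (hX : ContDiff ℝ 1 X)
    (φ : ℝ → EuclideanSpace ℝ (Fin n) → EuclideanSpace ℝ (Fin n))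
    (hφC1 : ContDiff ℝ 1 (fun p : ℝ × EuclideanSpace ℝ (Fin n) => φ p.1 p.2))
    (Dφ : ℝ → EuclideanSpace ℝ (Fin n) →
      (EuclideanSpace ℝ (Fin n) →L[ℝ] EuclideanSpace ℝ (Fin n)))
    (hφ0 : ∀ x, φ 0 x = x)
    (hφadd : ∀ s t : ℝ, ∀ x, φ (s + t) x = φ s (φ t x))
    (hφX : ∀ (t : ℝ) (x : EuclideanSpace ℝ (Fin n)),
      HasDerivAt (fun s : ℝ => φ s x) (X (φ t x)) t)
    (hDφ : ∀ (t : ℝ) (x : EuclideanSpace ℝ (Fin n)), HasFDerivAt (φ t) (Dφ t x) x)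
    (Λ : Set (EuclideanSpace ℝ (Fin n)))
    (hΛcomp : IsCompact Λ)
    (hΛinv : ∀ t : ℝ, φ t '' Λ = Λ)
    (P : EuclideanSpace ℝ (Fin n) →
      (EuclideanSpace ℝ (Fin n) →L[ℝ] EuclideanSpace ℝ (Fin n)))
    (hPcont : ContinuousOn P Λ)
    (hPproj : ∀ x ∈ Λ, (P x).comp (P x) = P x)
    (hPinv : ∀ x ∈ Λ, ∀ t : ℝ, (Dφ t x).comp (P x) = (P (φ t x)).comp (Dφ t x))
    (K lam : ℝ) (hK : 0 < K) (hlam : 0 < lam)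
    (hcontr : ∀ x ∈ Λ, ∀ v ∈ Set.range (P x), ∀ t : ℝ, 0 ≤ t →
      ‖Dφ t x v‖ ≤ K * Real.exp (-lam * t) * ‖v‖) :
    ∀ x ∈ Λ, P x (X x) = 0 :=
  stmt_12_general X hX φ Dφ hφ0 hφadd hφX hDφ Λ hΛcomp hΛinv P hPcont hPinv K lam hlam hcontr
end
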